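/- arXiv:2008.11824 — 6 statements merged into one kernel-verified Lean document; each statement's English description precedes it below -/
import Mathlib

section
/- Let h : ℝ^d → ℝ be convex and M-smooth for a positive semidefinite matrix M (i.e., h(x+t) ≤ h(x) + ⟨∇h(x), t⟩ + (1/2)⟨Mt, t⟩ for all x, t). Then for all x, y, the Bregman distance satisfies D_h(x,y) := h(x) - h(y) - ⟨∇h(y), x - y⟩ ≥ (1/2)‖∇h(x) - ∇h(y)‖²_{M†}, where M† is the Moore–Penrose pseudoinverse and ‖v‖²_{M†} = ⟨M†v, v⟩. -/
open Matrix

/-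
Convexity at `y` and `M`-smoothness at `x`, chained through the point `x + t`, give
`D_h(x, y) ≥ -⟨∇h(x) - ∇h(y), t⟩ - ½⟨Mt, t⟩` for every step `t`. The step `t = -M†(∇h(x) - ∇h(y))`
makes the right-hand side equal to `½‖∇h(x) - ∇h(y)‖²_{M†}`, because the pseudoinverse of a
symmetric matrix commutes with it, so that `M†ᵀ M M† = M† M M† = M†`.
-/

section Pseudoinverse

variable {n R : Type*} [Fintype n] [CommSemiring R] {M Mdag : Matrix n n R}

theorem mul_comm_of_penrose (hMsymm : Mᵀ = M) (hP1 : M * Mdag * M = M)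
    (hP3 : (M * Mdag)ᵀ = M * Mdag) (hP4 : (Mdag * M)ᵀ = Mdag * M) :
    M * Mdag = Mdag * M := by
  have hP1T : M * Mdagᵀ * M = M := by
    simpa only [transpose_mul, hMsymm, Matrix.mul_assoc] using congrArg transpose hP1
  have hMMdagT : M * Mdagᵀ = Mdag * M := by rw [← hP4, transpose_mul, hMsymm]
  have hMdagTM : Mdagᵀ * M = M * Mdag := by rw [← hP3, transpose_mul, hMsymm]
  calc M * Mdag = M * Mdagᵀ * M * Mdag := by rw [hP1T]
    _ = Mdag * M * (M * Mdag) := by rw [hMMdagT, Matrix.mul_assoc]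
    _ = Mdag * (M * Mdagᵀ * M) := by
      rw [← hMdagTM]; simp only [Matrix.mul_assoc]
    _ = Mdag * M := by rw [hP1T]

theorem transpose_mul_mul_eq_of_penrose (hMsymm : Mᵀ = M) (hP1 : M * Mdag * M = M)
    (hP2 : Mdag * M * Mdag = Mdag) (hP3 : (M * Mdag)ᵀ = M * Mdag)
    (hP4 : (Mdag * M)ᵀ = Mdag * M) :
    Mdagᵀ * M * Mdag = Mdag := by
  have hMdagTM : Mdagᵀ * M = M * Mdag := by rw [← hP3, transpose_mul, hMsymm]
  rw [hMdagTM, mul_comm_of_penrose hMsymm hP1 hP3 hP4, hP2]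

theorem mulVec_pinv_dotProduct_of_penrose (hMsymm : Mᵀ = M) (hP1 : M * Mdag * M = M)
    (hP2 : Mdag * M * Mdag = Mdag) (hP3 : (M * Mdag)ᵀ = M * Mdag)
    (hP4 : (Mdag * M)ᵀ = Mdag * M) (v : n → R) :
    M *ᵥ (Mdag *ᵥ v) ⬝ᵥ Mdag *ᵥ v = Mdag *ᵥ v ⬝ᵥ v := by
  calc M *ᵥ (Mdag *ᵥ v) ⬝ᵥ Mdag *ᵥ v = v ⬝ᵥ (Mdagᵀ * M * Mdag) *ᵥ v := by
        rw [dotProduct_comm, mulVec_mulVec, dotProduct_mulVec, ← vecMul_transpose, vecMul_vecMul,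
          ← Matrix.mul_assoc, ← dotProduct_mulVec]
    _ = Mdag *ᵥ v ⬝ᵥ v := by
        rw [transpose_mul_mul_eq_of_penrose hMsymm hP1 hP2 hP3 hP4, dotProduct_comm]

end Pseudoinverse

theorem bregman_ge_of_convex_of_smooth {n : Type*} [Fintype n] {h : (n → ℝ) → ℝ}
    {g : (n → ℝ) → n → ℝ} {M : Matrix n n ℝ}
    (hconv : ∀ x y, h y + g y ⬝ᵥ (x - y) ≤ h x)
    (hsmooth : ∀ x t, h (x + t) ≤ h x + g x ⬝ᵥ t + (1/2) * (M *ᵥ t ⬝ᵥ t)) (x y t : n → ℝ) :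
    -((g x - g y) ⬝ᵥ t) - (1/2) * (M *ᵥ t ⬝ᵥ t) ≤ h x - h y - g y ⬝ᵥ (x - y) := by
  have hlower := hconv (x + t) y
  have hupper := hsmooth x t
  rw [show x + t - y = (x - y) + t by abel, dotProduct_add] at hlower
  rw [sub_dotProduct]
  linarith

theorem bregman_ge_half_pinv_norm_general {d : ℕ}
    (h : (Fin d → ℝ) → ℝ) (g : (Fin d → ℝ) → (Fin d → ℝ))
    (M Mdag : Matrix (Fin d) (Fin d) ℝ)
    (hMsymm : Mᵀ = M)
    (hP1 : M * Mdag * M = M) (hP2 : Mdag * M * Mdag = Mdag)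
    (hP3 : (M * Mdag)ᵀ = M * Mdag) (hP4 : (Mdag * M)ᵀ = Mdag * M)
    (hconv : ∀ x y : Fin d → ℝ, h y + g y ⬝ᵥ (x - y) ≤ h x)
    (hsmooth : ∀ x t : Fin d → ℝ,
      h (x + t) ≤ h x + g x ⬝ᵥ t + (1/2) * (M.mulVec t ⬝ᵥ t)) :
    ∀ x y : Fin d → ℝ,
      (1/2) * (Mdag.mulVec (g x - g y) ⬝ᵥ (g x - g y)) ≤ h x - h y - g y ⬝ᵥ (x - y) := by
  intro x y
  set v := g x - g y
  have hbound := bregman_ge_of_convex_of_smooth hconv hsmooth x y (-(Mdag *ᵥ v))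
  simp only [mulVec_neg, neg_dotProduct, dotProduct_neg, neg_neg,
    mulVec_pinv_dotProduct_of_penrose hMsymm hP1 hP2 hP3 hP4] at hbound
  linarith [dotProduct_comm v (Mdag *ᵥ v)]

/-- Bregman distance lower bound: for convex `M`-smooth `h` with gradient `g`,
`D_h(x,y) ≥ (1/2)‖g x - g y‖²_{M†}` where `Mdag` is the Moore–Penrose pseudoinverse of `M`. -/
theorem bregman_ge_half_pinv_norm {d : ℕ}
    (h : (Fin d → ℝ) → ℝ) (g : (Fin d → ℝ) → (Fin d → ℝ))
    (M Mdag : Matrix (Fin d) (Fin d) ℝ)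
    (hMsymm : Mᵀ = M)
    (hMpsd : ∀ v : Fin d → ℝ, 0 ≤ v ⬝ᵥ M.mulVec v)
    (hP1 : M * Mdag * M = M) (hP2 : Mdag * M * Mdag = Mdag)
    (hP3 : (M * Mdag)ᵀ = M * Mdag) (hP4 : (Mdag * M)ᵀ = Mdag * M)
    (hconv : ∀ x y : Fin d → ℝ, h y + g y ⬝ᵥ (x - y) ≤ h x)
    (hsmooth : ∀ x t : Fin d → ℝ,
      h (x + t) ≤ h x + g x ⬝ᵥ t + (1/2) * (M.mulVec t ⬝ᵥ t)) :
    ∀ x y : Fin d → ℝ,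
      (1/2) * (Mdag.mulVec (g x - g y) ⬝ᵥ (g x - g y)) ≤ h x - h y - g y ⬝ᵥ (x - y) :=
  bregman_ge_half_pinv_norm_general h g M Mdag hMsymm hP1 hP2 hP3 hP4 hconv hsmooth
end

section
/- Let h : ℝ^d → ℝ be convex, differentiable, and M-smooth for a positive semidefinite matrix M. Then for all x, y: ⟨∇h(x) - ∇h(y), x - y⟩ ≥ ‖∇h(x) - ∇h(y)‖²_{M†}. -/
/-!
Convexity at `y` and `M`-smoothness at `x`, applied at the point `x + t`, give
`D(x, y) ≥ ⟨g y - g x, t⟩ - ½ ⟨M t, t⟩` for the Bregman divergence `D` of `h` and every `t`.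
Taking `t = M† (g y - g x)` and using `M† M M† = M†` bounds `D(x, y)` below by
`½ ‖g x - g y‖²_{M†}`; this needs `M†` symmetric, which holds because the Moore–Penrose inverse
is unique and `M†ᵀ` is a Moore–Penrose inverse of `Mᵀ = M`. Adding the bound for `(x, y)` and
`(y, x)` gives the claim, since `D(x, y) + D(y, x) = ⟨g x - g y, x - y⟩`.
-/

open Matrix

structure IsMoorePenroseInverse {R : Type*} [Mul R] [Star R] (a x : R) : Prop where
  mul_inv_mul : a * x * a = a
  inv_mul_inv : x * a * x = x
  star_mul_inv : star (a * x) = a * x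
  star_inv_mul : star (x * a) = x * a

namespace IsMoorePenroseInverse

variable {R : Type*} [Semigroup R] [StarMul R] {a x y : R}

theorem eq_mul_mul_left (hx : IsMoorePenroseInverse a x) (hy : IsMoorePenroseInverse a y) :
    x = x * a * y :=
  calc x = x * star (a * x) := by rw [hx.star_mul_inv, ← mul_assoc, hx.inv_mul_inv]
    _ = x * star x * star (a * y * a) := by rw [hy.mul_inv_mul, star_mul, mul_assoc]
    _ = x * star (a * x) * star (a * y) := by simp only [star_mul, mul_assoc]
    _ = x * a * y := by rw [hx.star_mul_inv, hy.star_mul_inv, ← mul_assoc, ← mul_assoc x a x,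
          hx.inv_mul_inv]

theorem eq_mul_mul_right (hx : IsMoorePenroseInverse a x) (hy : IsMoorePenroseInverse a y) :
    y = x * a * y :=
  calc y = star (y * a) * y := by rw [hy.star_inv_mul, hy.inv_mul_inv]
    _ = star (a * x * a) * star y * y := by rw [hx.mul_inv_mul, star_mul]
    _ = star (x * a) * star (y * a) * y := by simp only [star_mul, mul_assoc]
    _ = x * a * y := by rw [hx.star_inv_mul, hy.star_inv_mul, mul_assoc (x * a), hy.inv_mul_inv]

theorem unique (hx : IsMoorePenroseInverse a x) (hy : IsMoorePenroseInverse a y) : x = y :=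
  (hx.eq_mul_mul_left hy).trans (hx.eq_mul_mul_right hy).symm

theorem star (hx : IsMoorePenroseInverse a x) : IsMoorePenroseInverse (star a) (star x) where
  mul_inv_mul := by rw [← star_mul, ← star_mul, ← mul_assoc, hx.mul_inv_mul]
  inv_mul_inv := by rw [← star_mul, ← star_mul, ← mul_assoc, hx.inv_mul_inv]
  star_mul_inv := by rw [← star_mul, star_star, hx.star_inv_mul]
  star_inv_mul := by rw [← star_mul, star_star, hx.star_mul_inv]

theorem isSelfAdjoint (ha : IsSelfAdjoint a) (hx : IsMoorePenroseInverse a x) :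
    IsSelfAdjoint x := by
  have := hx.star
  rw [ha.star_eq] at this
  exact this.unique hx

end IsMoorePenroseInverse

namespace Matrix

variable {n α : Type*} [Fintype n] [CommSemiring α] {A X : Matrix n n α}

theorem isMoorePenroseInverse_iff [StarRing α] [TrivialStar α] :
    IsMoorePenroseInverse A X ↔
      A * X * A = A ∧ X * A * X = X ∧ (A * X)ᵀ = A * X ∧ (X * A)ᵀ = X * A := by
  simp only [← conjTranspose_eq_transpose_of_trivial (A * X),
    ← conjTranspose_eq_transpose_of_trivial (X * A), ← star_eq_conjTranspose]
  exact ⟨fun ⟨h1, h2, h3, h4⟩ => ⟨h1, h2, h3, h4⟩, fun ⟨h1, h2, h3, h4⟩ => ⟨h1, h2, h3, h4⟩⟩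

theorem IsSymm.of_isMoorePenroseInverse [StarRing α] [TrivialStar α] (hA : A.IsSymm)
    (hX : IsMoorePenroseInverse A X) : X.IsSymm :=
  isHermitian_iff_isSymm.1 <|
    (hX.isSelfAdjoint (isHermitian_iff_isSymm.2 hA).isSelfAdjoint).isHermitian

theorem mulVec_mulVec_dotProduct_mulVec_of_mul_mul_eq (hX : X * A * X = X) (hXs : X.IsSymm)
    (v : n → α) : A *ᵥ (X *ᵥ v) ⬝ᵥ X *ᵥ v = X *ᵥ v ⬝ᵥ v :=
  calc A *ᵥ (X *ᵥ v) ⬝ᵥ X *ᵥ v = v ᵥ* Xᵀ ⬝ᵥ A *ᵥ (X *ᵥ v) := by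
        rw [vecMul_transpose, dotProduct_comm]
    _ = v ⬝ᵥ (X * A * X) *ᵥ v := by
        rw [hXs.eq, ← dotProduct_mulVec, mulVec_mulVec, mulVec_mulVec]
    _ = X *ᵥ v ⬝ᵥ v := by rw [hX, dotProduct_comm]

end Matrix

section Bregman

variable {n : Type*} [Fintype n] (h : (n → ℝ) → ℝ) (g : (n → ℝ) → n → ℝ)

def bregmanDiv (x y : n → ℝ) : ℝ := h x - h y - g y ⬝ᵥ (x - y)

theorem bregmanDiv_add_bregmanDiv (x y : n → ℝ) :
    bregmanDiv h g x y + bregmanDiv h g y x = (g x - g y) ⬝ᵥ (x - y) := by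
  rw [bregmanDiv, bregmanDiv, ← neg_sub x y, dotProduct_neg, sub_dotProduct]
  ring

variable {h g} {M : Matrix n n ℝ}

theorem dotProduct_sub_le_bregmanDiv (hconv : ∀ x y, h y + g y ⬝ᵥ (x - y) ≤ h x)
    (hsmooth : ∀ x t, h (x + t) ≤ h x + g x ⬝ᵥ t + (1/2) * (M *ᵥ t ⬝ᵥ t))
    (x y t : n → ℝ) :
    (g y - g x) ⬝ᵥ t - (1/2) * (M *ᵥ t ⬝ᵥ t) ≤ bregmanDiv h g x y := by
  have hlower := hconv (x + t) y
  have hupper := hsmooth x t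
  rw [add_sub_right_comm, dotProduct_add] at hlower
  rw [bregmanDiv, sub_dotProduct]
  linarith

theorem half_dotProduct_mulVec_le_bregmanDiv {X : Matrix n n ℝ}
    (hconv : ∀ x y, h y + g y ⬝ᵥ (x - y) ≤ h x)
    (hsmooth : ∀ x t, h (x + t) ≤ h x + g x ⬝ᵥ t + (1/2) * (M *ᵥ t ⬝ᵥ t))
    (hX : X * M * X = X) (hXs : X.IsSymm) (x y : n → ℝ) :
    (1/2) * (X *ᵥ (g y - g x) ⬝ᵥ (g y - g x)) ≤ bregmanDiv h g x y := by
  have key := dotProduct_sub_le_bregmanDiv hconv hsmooth x y (X *ᵥ (g y - g x))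
  rw [mulVec_mulVec_dotProduct_mulVec_of_mul_mul_eq hX hXs, dotProduct_comm] at key
  linarith

end Bregman

theorem grad_diff_inner_ge_pinv_norm_general {d : ℕ}
    (h : (Fin d → ℝ) → ℝ) (g : (Fin d → ℝ) → (Fin d → ℝ))
    (M Mdag : Matrix (Fin d) (Fin d) ℝ)
    (hMsymm : Mᵀ = M)
    (hP1 : M * Mdag * M = M) (hP2 : Mdag * M * Mdag = Mdag)
    (hP3 : (M * Mdag)ᵀ = M * Mdag) (hP4 : (Mdag * M)ᵀ = Mdag * M)
    (hconv : ∀ x y : Fin d → ℝ, h y + g y ⬝ᵥ (x - y) ≤ h x)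
    (hsmooth : ∀ x t : Fin d → ℝ,
      h (x + t) ≤ h x + g x ⬝ᵥ t + (1/2) * (M.mulVec t ⬝ᵥ t)) :
    ∀ x y : Fin d → ℝ,
      Mdag.mulVec (g x - g y) ⬝ᵥ (g x - g y) ≤ (g x - g y) ⬝ᵥ (x - y) := by
  intro x y
  have hMdag : IsMoorePenroseInverse M Mdag := isMoorePenroseInverse_iff.2 ⟨hP1, hP2, hP3, hP4⟩
  have hMdag_symm : Mdag.IsSymm := IsSymm.of_isMoorePenroseInverse hMsymm hMdag
  have hxy := half_dotProduct_mulVec_le_bregmanDiv hconv hsmooth hP2 hMdag_symm x y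
  have hyx := half_dotProduct_mulVec_le_bregmanDiv hconv hsmooth hP2 hMdag_symm y x
  rw [← neg_sub (g x), mulVec_neg, neg_dotProduct, dotProduct_neg, neg_neg] at hxy
  linarith [bregmanDiv_add_bregmanDiv h g x y]

/-- Bregman distance lower bound: for convex `M`-smooth `h` with gradient `g`,
`D_h(x,y) ≥ (1/2)‖g x - g y‖²_{M†}` where `Mdag` is the Moore–Penrose pseudoinverse of `M`. -/
theorem grad_diff_inner_ge_pinv_norm {d : ℕ}
    (h : (Fin d → ℝ) → ℝ) (g : (Fin d → ℝ) → (Fin d → ℝ))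
    (M Mdag : Matrix (Fin d) (Fin d) ℝ)
    (hMsymm : Mᵀ = M)
    (hMpsd : ∀ v : Fin d → ℝ, 0 ≤ v ⬝ᵥ M.mulVec v)
    (hP1 : M * Mdag * M = M) (hP2 : Mdag * M * Mdag = Mdag)
    (hP3 : (M * Mdag)ᵀ = M * Mdag) (hP4 : (Mdag * M)ᵀ = Mdag * M)
    (hconv : ∀ x y : Fin d → ℝ, h y + g y ⬝ᵥ (x - y) ≤ h x)
    (hsmooth : ∀ x t : Fin d → ℝ,
      h (x + t) ≤ h x + g x ⬝ᵥ t + (1/2) * (M.mulVec t ⬝ᵥ t)) :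
    ∀ x y : Fin d → ℝ,
      Mdag.mulVec (g x - g y) ⬝ᵥ (g x - g y) ≤ (g x - g y) ⬝ᵥ (x - y) :=
  grad_diff_inner_ge_pinv_norm_general h g M Mdag hMsymm hP1 hP2 hP3 hP4 hconv hsmooth
end

section
/- Let f : ℝ^d → ℝ be convex, differentiable, and M-smooth for a symmetric positive semidefinite matrix M. If x - y ∈ Null(M), then ∇f(x) - ∇f(y) ∈ Null(M). -/
/-!
Along a null direction `u` of `M` the smoothness bound collapses onto the convexity bound, so `f`
is affine from `y` to `x = y + u` with slope `∇f(y)`. Comparing the convexity bound at `y` with the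
smoothness bound at `x` at a point `x + t v` then gives `t ⟪∇f(y) - ∇f(x), v⟫ ≤ t² ⟪v, M v⟫ / 2`
for every `t`, which forces `∇f(x) = ∇f(y)`.
-/

open Matrix

theorem eq_zero_of_forall_mul_le_sq_mul {c a : ℝ} (h : ∀ t : ℝ, t * c ≤ t ^ 2 * a) : c = 0 := by
  have hpos : 0 < 2 * (|a| + 1) := by positivity
  have htest := h (c / (2 * (|a| + 1)))
  field_simp at htest
  nlinarith [sq_nonneg c, le_abs_self a]

section ConvexSmooth

variable {n : Type*} [Fintype n] {f : (n → ℝ) → ℝ} {g : (n → ℝ) → n → ℝ} {M : Matrix n n ℝ}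

theorem eq_add_dotProduct_of_mulVec_sub_eq_zero
    (hconv : ∀ x y, f y + g y ⬝ᵥ (x - y) ≤ f x)
    (hsmooth : ∀ x y, f x ≤ f y + g y ⬝ᵥ (x - y) + (1/2) * ((x - y) ⬝ᵥ M *ᵥ (x - y)))
    {x y : n → ℝ} (hxy : M *ᵥ (x - y) = 0) :
    f x = f y + g y ⬝ᵥ (x - y) := by
  have := hsmooth x y
  rw [hxy, dotProduct_zero, mul_zero, add_zero] at this
  exact le_antisymm this (hconv x y)

theorem eq_of_mulVec_sub_eq_zero
    (hconv : ∀ x y, f y + g y ⬝ᵥ (x - y) ≤ f x)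
    (hsmooth : ∀ x y, f x ≤ f y + g y ⬝ᵥ (x - y) + (1/2) * ((x - y) ⬝ᵥ M *ᵥ (x - y)))
    {x y : n → ℝ} (hxy : M *ᵥ (x - y) = 0) :
    g x = g y := by
  have hline := eq_add_dotProduct_of_mulVec_sub_eq_zero hconv hsmooth hxy
  have hslope : ∀ v, (g y - g x) ⬝ᵥ v = 0 := fun v => by
    refine eq_zero_of_forall_mul_le_sq_mul (a := (v ⬝ᵥ M *ᵥ v) / 2) fun t => ?_
    have hlower := hconv (x + t • v) y
    have hupper := hsmooth (x + t • v) x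
    rw [show x + t • v - y = t • v + (x - y) by abel, dotProduct_add] at hlower
    simp only [add_sub_cancel_left, mulVec_smul, dotProduct_smul, smul_dotProduct,
      smul_eq_mul] at hlower hupper
    rw [sub_dotProduct]
    nlinarith
  have := hslope (g y - g x)
  rw [dotProduct_self_eq_zero, sub_eq_zero] at this
  exact this.symm

end ConvexSmooth

theorem grad_diff_in_nullspace_general {d : ℕ}
    (f : (Fin d → ℝ) → ℝ) (g : (Fin d → ℝ) → (Fin d → ℝ))
    (M : Matrix (Fin d) (Fin d) ℝ)
    (hconv : ∀ x y : Fin d → ℝ, f y + g y ⬝ᵥ (x - y) ≤ f x)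
    (hsmooth : ∀ x y : Fin d → ℝ,
      f x ≤ f y + g y ⬝ᵥ (x - y) + (1/2) * ((x - y) ⬝ᵥ M.mulVec (x - y))) :
    ∀ x y : Fin d → ℝ, M.mulVec (x - y) = 0 → M.mulVec (g x - g y) = 0 := by
  intro x y hxy
  rw [eq_of_mulVec_sub_eq_zero hconv hsmooth hxy, sub_self, mulVec_zero]

/-- If `f` is convex and `M`-smooth and `x - y ∈ Null(M)`, then
`f(x) = f(y) + ⟨∇f(y), x - y⟩`. -/
theorem grad_diff_in_nullspace {d : ℕ}
    (f : (Fin d → ℝ) → ℝ) (g : (Fin d → ℝ) → (Fin d → ℝ))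
    (M : Matrix (Fin d) (Fin d) ℝ)
    (hMsymm : Mᵀ = M)
    (hMpsd : ∀ v : Fin d → ℝ, 0 ≤ v ⬝ᵥ M.mulVec v)
    (hconv : ∀ x y : Fin d → ℝ, f y + g y ⬝ᵥ (x - y) ≤ f x)
    (hsmooth : ∀ x y : Fin d → ℝ,
      f x ≤ f y + g y ⬝ᵥ (x - y) + (1/2) * ((x - y) ⬝ᵥ M.mulVec (x - y))) :
    ∀ x y : Fin d → ℝ, M.mulVec (x - y) = 0 → M.mulVec (g x - g y) = 0 :=
  grad_diff_in_nullspace_general f g M hconv hsmooth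
end

section
/- Let f : ℝ^d → ℝ be convex, differentiable, M-smooth for a symmetric positive semidefinite matrix M, and bounded below. Then ∇f(x) ∈ Range(M) for every x ∈ ℝ^d. -/
/-!
Along a direction `v` in the kernel of `M` the quadratic upper bound degenerates to the affine
bound `f (x + t • v) ≤ f x + t * ⟪∇f x, v⟫`, which is bounded below in `t` only if
`⟪∇f x, v⟫ = 0`. So `∇f x ⊥ ker M`, and `(ker M)ᗮ = range M` since `M` is symmetric.
-/

open Matrix

theorem Matrix.IsHermitian.exists_mulVec_eq_of_forall_mulVec_eq_zero
    {𝕜 n : Type*} [RCLike 𝕜] [Fintype n] [DecidableEq n] {A : Matrix n n 𝕜}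
    (hA : A.IsHermitian) {w : n → 𝕜} (hw : ∀ v, A *ᵥ v = 0 → star v ⬝ᵥ w = 0) :
    ∃ u, A *ᵥ u = w := by
  have hmem : WithLp.toLp 2 w ∈ (LinearMap.ker A.toEuclideanLin)ᗮ := fun v hv ↦
    (dotProduct_comm _ _).trans (hw _ (congrArg WithLp.ofLp hv))
  rw [← (isSymmetric_toEuclideanLin_iff.mpr hA).orthogonal_range,
    Submodule.orthogonal_orthogonal] at hmem
  obtain ⟨u, hu⟩ := hmem
  exact ⟨u.ofLp, congrArg WithLp.ofLp hu⟩

theorem eq_zero_of_forall_le_add_mul {a b c : ℝ} (h : ∀ t, c ≤ b + t * a) : a = 0 := by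
  by_contra ha
  have := h ((c - b - 1) / a)
  rw [div_mul_cancel₀ _ ha] at this
  linarith

theorem dotProduct_eq_zero_of_le_quadratic_of_bddBelow {n : Type*} [Fintype n]
    {f : (n → ℝ) → ℝ} {g : (n → ℝ) → (n → ℝ)} {M : Matrix n n ℝ} {c : ℝ}
    (hsmooth : ∀ x y, f x ≤ f y + g y ⬝ᵥ (x - y) + (1/2) * ((x - y) ⬝ᵥ M *ᵥ (x - y)))
    (hc : ∀ x, c ≤ f x) (x : n → ℝ) {v : n → ℝ} (hv : M *ᵥ v = 0) :
    v ⬝ᵥ g x = 0 := by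
  refine eq_zero_of_forall_le_add_mul (b := f x) (c := c) fun t ↦ ?_
  have hline := hsmooth (x + t • v) x
  rw [add_sub_cancel_left, mulVec_smul, hv, smul_zero, dotProduct_zero, dotProduct_smul,
    dotProduct_comm, smul_eq_mul] at hline
  linarith [hc (x + t • v)]

theorem grad_in_range_general {d : ℕ}
    (f : (Fin d → ℝ) → ℝ) (g : (Fin d → ℝ) → (Fin d → ℝ))
    (M : Matrix (Fin d) (Fin d) ℝ)
    (hMsymm : Mᵀ = M)
    (hsmooth : ∀ x y : Fin d → ℝ,
      f x ≤ f y + g y ⬝ᵥ (x - y) + (1/2) * ((x - y) ⬝ᵥ M.mulVec (x - y))) :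
    ∀ c : ℝ, (∀ x, c ≤ f x) →
      ∀ x : Fin d → ℝ, ∃ u : Fin d → ℝ, M.mulVec u = g x := by
  intro c hc x
  have hM : M.IsHermitian := by rwa [IsHermitian, conjTranspose_eq_transpose_of_trivial]
  exact hM.exists_mulVec_eq_of_forall_mulVec_eq_zero fun v hv ↦ by
    simpa only [star_trivial] using dotProduct_eq_zero_of_le_quadratic_of_bddBelow hsmooth hc x hv

/-- If `f` is convex and `M`-smooth and `x - y ∈ Null(M)`, then
`f(x) = f(y) + ⟨∇f(y), x - y⟩`. -/
theorem grad_in_range {d : ℕ}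
    (f : (Fin d → ℝ) → ℝ) (g : (Fin d → ℝ) → (Fin d → ℝ))
    (M : Matrix (Fin d) (Fin d) ℝ)
    (hMsymm : Mᵀ = M)
    (hMpsd : ∀ v : Fin d → ℝ, 0 ≤ v ⬝ᵥ M.mulVec v)
    (hconv : ∀ x y : Fin d → ℝ, f y + g y ⬝ᵥ (x - y) ≤ f x)
    (hsmooth : ∀ x y : Fin d → ℝ,
      f x ≤ f y + g y ⬝ᵥ (x - y) + (1/2) * ((x - y) ⬝ᵥ M.mulVec (x - y))) :
    ∀ c : ℝ, (∀ x, c ≤ f x) →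
      ∀ x : Fin d → ℝ, ∃ u : Fin d → ℝ, M.mulVec u = g x :=
  grad_in_range_general f g M hMsymm hsmooth
end

section
/- Let S be a random orthogonal projection matrix (S² = S = Sᵀ almost surely) on ℝ^d and A a deterministic matrix commuting with S almost surely. For fixed X, Y ∈ ℝ^{d×n}, let Z = (I-S)X + SY. Then E[‖AZ‖²_F] = ‖(I - E[S])^{1/2} A X‖²_F + ‖E[S]^{1/2} A Y‖²_F. -/
open Matrix

/-!
Since `S` commutes with `A`, `AZ = (I - S)AX + S AY`, and the two summands lie in the
orthogonal ranges of the complementary projections `I - S` and `S`; so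
`(AZ)ᵀ(AZ) = (AX)ᵀ(I - S)(AX) + (AY)ᵀ S (AY)`. This is affine in `S`, hence its expected trace
is obtained by replacing `S` with `E[S]`, and `(AX)ᵀ(I - E[S])(AX) = (Q AX)ᵀ(Q AX)` for the
square root `Q` of `I - E[S]` (likewise for `E[S]`).
-/

namespace Matrix

variable {m n ι α : Type*} [Fintype m] [CommRing α]

theorem transpose_mul_self_of_projection_combination [DecidableEq m] {S : Matrix m m α}
    (hproj : IsIdempotentElem S) (hsymm : S.IsSymm) (M N : Matrix m n α) :
    ((1 - S) * M + S * N)ᵀ * ((1 - S) * M + S * N) = Mᵀ * (1 - S) * M + Nᵀ * S * N := by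
  have hcompl : S * (1 - S) = 0 := by rw [mul_sub, mul_one, hproj.eq, sub_self]
  have hcompl' : (1 - S) * S = 0 := by rw [sub_mul, one_mul, hproj.eq, sub_self]
  have hsymm' : (1 - S)ᵀ = 1 - S := by rw [transpose_sub, transpose_one, hsymm.eq]
  rw [transpose_add, transpose_mul, transpose_mul, hsymm', hsymm.eq]
  simp only [Matrix.add_mul, Matrix.mul_add, ← Matrix.mul_assoc]
  simp only [Matrix.mul_assoc _ (1 - S) (1 - S), Matrix.mul_assoc _ (1 - S) S,
    Matrix.mul_assoc _ S (1 - S), Matrix.mul_assoc _ S S, hproj.one_sub.eq, hproj.eq, hcompl,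
    hcompl', Matrix.mul_zero, Matrix.zero_mul, add_zero, zero_add]

theorem mul_projection_combination_of_commute [DecidableEq m] {A S : Matrix m m α}
    (hcomm : Commute A S) (X Y : Matrix m n α) :
    A * ((1 - S) * X + S * Y) = (1 - S) * (A * X) + S * (A * Y) := by
  rw [Matrix.mul_add, ← Matrix.mul_assoc, ← Matrix.mul_assoc,
    ((Commute.one_right A).sub_right hcomm).eq, hcomm.eq, Matrix.mul_assoc, Matrix.mul_assoc]

theorem IsSymm.transpose_mul_mul_self {Q : Matrix m m α} (hQ : Q.IsSymm) (C : Matrix m n α) :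
    (Q * C)ᵀ * (Q * C) = Cᵀ * (Q * Q) * C := by
  rw [transpose_mul, hQ.eq, Matrix.mul_assoc, Matrix.mul_assoc, Matrix.mul_assoc]

theorem trace_mul_sum_smul_mul [Fintype n] [Fintype ι] (L : Matrix n m α) (R : Matrix m n α)
    (p : ι → α) (B : ι → Matrix m m α) :
    trace (L * (∑ i, p i • B i) * R) = ∑ i, p i * trace (L * B i * R) := by
  simp only [Matrix.mul_sum, Matrix.sum_mul, trace_sum, Matrix.mul_smul, Matrix.smul_mul,
    trace_smul, smul_eq_mul]

end Matrix

theorem proj_expected_frobenius_decomp_general {d n : ℕ} {Ω : Type} [Fintype Ω]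
    (p : Ω → ℝ) (hp1 : ∑ ω, p ω = 1)
    (S : Ω → Matrix (Fin d) (Fin d) ℝ)
    (hproj : ∀ ω, S ω * S ω = S ω) (hsymm : ∀ ω, (S ω)ᵀ = S ω)
    (A : Matrix (Fin d) (Fin d) ℝ) (hcomm : ∀ ω, A * S ω = S ω * A)
    (X Y : Matrix (Fin d) (Fin n) ℝ)
    (ES Q Qt : Matrix (Fin d) (Fin d) ℝ)
    (hES : ES = ∑ ω, p ω • S ω)
    (hQ : Q * Q = 1 - ES) (hQsymm : Qᵀ = Q)
    (hQt : Qt * Qt = ES) (hQtsymm : Qtᵀ = Qt) :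
    ∑ ω, p ω * Matrix.trace
        ((A * ((1 - S ω) * X + S ω * Y))ᵀ * (A * ((1 - S ω) * X + S ω * Y)))
      = Matrix.trace ((Q * A * X)ᵀ * (Q * A * X))
        + Matrix.trace ((Qt * A * Y)ᵀ * (Qt * A * Y)) := by
  have hmean_compl : ∑ ω, p ω • (1 - S ω) = 1 - ES := by
    simp only [hES, smul_sub, Finset.sum_sub_distrib, ← Finset.sum_smul, hp1, one_smul]
  rw [Matrix.mul_assoc Q, Matrix.mul_assoc Qt, IsSymm.transpose_mul_mul_self hQsymm,
    IsSymm.transpose_mul_mul_self hQtsymm, hQ, hQt, ← hmean_compl, hES,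
    trace_mul_sum_smul_mul, trace_mul_sum_smul_mul, ← Finset.sum_add_distrib]
  refine Finset.sum_congr rfl fun ω _ => ?_
  rw [mul_projection_combination_of_commute (hcomm ω),
    transpose_mul_self_of_projection_combination (hproj ω) (hsymm ω), trace_add, mul_add]

/-- Projection lemma (iii): for a random orthogonal projection `S` (modeled on a finite
probability space) commuting with a deterministic `A`, and `Z = (I-S)X + SY`,
`E‖AZ‖²_F = ‖(I - E[S])^{1/2} AX‖²_F + ‖E[S]^{1/2} AY‖²_F`. -/
theorem proj_expected_frobenius_decomp {d n : ℕ} {Ω : Type} [Fintype Ω]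
    (p : Ω → ℝ) (hp : ∀ ω, 0 ≤ p ω) (hp1 : ∑ ω, p ω = 1)
    (S : Ω → Matrix (Fin d) (Fin d) ℝ)
    (hproj : ∀ ω, S ω * S ω = S ω) (hsymm : ∀ ω, (S ω)ᵀ = S ω)
    (A : Matrix (Fin d) (Fin d) ℝ) (hcomm : ∀ ω, A * S ω = S ω * A)
    (X Y : Matrix (Fin d) (Fin n) ℝ)
    (ES Q Qt : Matrix (Fin d) (Fin d) ℝ)
    (hES : ES = ∑ ω, p ω • S ω)
    (hQ : Q * Q = 1 - ES) (hQsymm : Qᵀ = Q)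
    (hQpsd : ∀ v : Fin d → ℝ, 0 ≤ v ⬝ᵥ Q.mulVec v)
    (hQt : Qt * Qt = ES) (hQtsymm : Qtᵀ = Qt)
    (hQtpsd : ∀ v : Fin d → ℝ, 0 ≤ v ⬝ᵥ Qt.mulVec v) :
    ∑ ω, p ω * Matrix.trace
        ((A * ((1 - S ω) * X + S ω * Y))ᵀ * (A * ((1 - S ω) * X + S ω * Y)))
      = Matrix.trace ((Q * A * X)ᵀ * (Q * A * X))
        + Matrix.trace ((Qt * A * Y)ᵀ * (Qt * A * Y)) :=
  proj_expected_frobenius_decomp_general p hp1 S hproj hsymm A hcomm X Y ES Q Qt hES hQ hQsymm hQt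
    hQtsymm
end

section
/- Let f : ℝ^d → ℝ be differentiable and μ-quasi strongly convex with minimizer x* (i.e., f(x*) ≥ f(x) + ⟨∇f(x), x* - x⟩ + (μ/2)‖x* - x‖² for all x). Let ψ be a proper closed convex function and suppose x* = prox_{αψ}(x* - α∇f(x*)) for some α > 0. Let g be a random vector with E[g] = ∇f(x) for a fixed x, and let x⁺ = prox_{αψ}(x - αg). Then E[‖x⁺ - x*‖²] ≤ (1 - αμ)‖x - x*‖² + α²·E[‖g - ∇f(x*)‖²] - 2α·D_f(x, x*), where D_f(x,x*) = f(x) - f(x*) - ⟨∇f(x*), x - x*⟩. -/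
/-!
Because `x*` is a fixed point of the prox-gradient map, nonexpansiveness of `prox` compares
`x⁺` with a gradient step taken from `x*`: `‖x⁺ - x*‖² ≤ ‖(x - x*) - α (g - ∇f(x*))‖²`.
Expanding this square and averaging, unbiasedness turns the cross term into
`⟨∇f(x) - ∇f(x*), x - x*⟩`, and quasi-strong convexity bounds `⟨∇f(x), x - x*⟩` from below by
`f(x) - f(x*) + (μ/2)‖x - x*‖²`.
-/

open Finset

section DotProduct

variable {ι R : Type*} [Fintype ι] [CommRing R]

theorem dotProduct_sub_smul_self (u v : ι → R) (a : R) :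
    (u - a • v) ⬝ᵥ (u - a • v) = u ⬝ᵥ u - 2 * a * (v ⬝ᵥ u) + a ^ 2 * (v ⬝ᵥ v) := by
  simp only [sub_dotProduct, dotProduct_sub, smul_dotProduct, dotProduct_smul, smul_eq_mul,
    dotProduct_comm u v]
  ring

variable {Ω : Type*} [Fintype Ω] {p : Ω → R} {g : Ω → ι → R} {m : ι → R}

theorem sum_mul_sub_dotProduct (hp1 : ∑ ω, p ω = 1) (hmean : ∑ ω, p ω • g ω = m)
    (v u : ι → R) : ∑ ω, p ω * ((g ω - v) ⬝ᵥ u) = (m - v) ⬝ᵥ u := by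
  simp only [sub_dotProduct, mul_sub, sum_sub_distrib, ← sum_mul, hp1, one_mul, ← hmean,
    sum_dotProduct, smul_dotProduct, smul_eq_mul]

theorem sum_mul_dotProduct_sub_smul_self (hp1 : ∑ ω, p ω = 1) (hmean : ∑ ω, p ω • g ω = m)
    (u v : ι → R) (a : R) :
    ∑ ω, p ω * (u ⬝ᵥ u - 2 * a * ((g ω - v) ⬝ᵥ u) + a ^ 2 * ((g ω - v) ⬝ᵥ (g ω - v)))
      = u ⬝ᵥ u - 2 * a * ((m - v) ⬝ᵥ u) + a ^ 2 * ∑ ω, p ω * ((g ω - v) ⬝ᵥ (g ω - v)) := by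
  simp only [mul_add, mul_sub, sum_add_distrib, sum_sub_distrib, ← sum_mul, hp1, one_mul,
    mul_left_comm (p _), ← mul_sum, sum_mul_sub_dotProduct hp1 hmean]

end DotProduct

theorem sub_smul_dotProduct_self_le_of_nonexpansive {ι R : Type*} [Fintype ι] [CommRing R]
    [Preorder R] {prox : (ι → R) → ι → R}
    (hnonexp : ∀ u v, (prox u - prox v) ⬝ᵥ (prox u - prox v) ≤ (u - v) ⬝ᵥ (u - v))
    {α : R} {xs v : ι → R} (hfix : prox (xs - α • v) = xs) (x w : ι → R) :
    (prox (x - α • w) - xs) ⬝ᵥ (prox (x - α • w) - xs)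
      ≤ (x - xs) ⬝ᵥ (x - xs) - 2 * α * ((w - v) ⬝ᵥ (x - xs)) + α ^ 2 * ((w - v) ⬝ᵥ (w - v)) := by
  have h := hnonexp (x - α • w) (xs - α • v)
  rwa [hfix, show x - α • w - (xs - α • v) = (x - xs) - α • (w - v) by module,
    dotProduct_sub_smul_self] at h

theorem prox_grad_step_contraction_general {d : ℕ} {Ω : Type} [Fintype Ω]
    (p : Ω → ℝ) (hp : ∀ ω, 0 ≤ p ω) (hp1 : ∑ ω, p ω = 1)
    (f : (Fin d → ℝ) → ℝ) (gf : (Fin d → ℝ) → (Fin d → ℝ))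
    (μ α : ℝ) (hα : 0 < α)
    (xs x : Fin d → ℝ)
    (hqsc : ∀ y : Fin d → ℝ,
      f y + gf y ⬝ᵥ (xs - y) + (μ / 2) * ((xs - y) ⬝ᵥ (xs - y)) ≤ f xs)
    (prox : (Fin d → ℝ) → (Fin d → ℝ))
    (hnonexp : ∀ u v : Fin d → ℝ,
      (prox u - prox v) ⬝ᵥ (prox u - prox v) ≤ (u - v) ⬝ᵥ (u - v))
    (hfix : prox (xs - α • gf xs) = xs)
    (g : Ω → Fin d → ℝ) (hmean : ∑ ω, p ω • g ω = gf x) :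
    ∑ ω, p ω * ((prox (x - α • g ω) - xs) ⬝ᵥ (prox (x - α • g ω) - xs))
      ≤ (1 - α * μ) * ((x - xs) ⬝ᵥ (x - xs))
        + α ^ 2 * ∑ ω, p ω * ((g ω - gf xs) ⬝ᵥ (g ω - gf xs))
        - 2 * α * (f x - f xs - gf xs ⬝ᵥ (x - xs)) := by
  have hgap : f x - f xs + μ / 2 * ((x - xs) ⬝ᵥ (x - xs)) ≤ gf x ⬝ᵥ (x - xs) := by
    have h := hqsc x
    rw [← neg_sub x xs, dotProduct_neg, neg_dotProduct, dotProduct_neg, neg_neg] at h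
    linarith
  calc _ ≤ ∑ ω, p ω * ((x - xs) ⬝ᵥ (x - xs) - 2 * α * ((g ω - gf xs) ⬝ᵥ (x - xs))
          + α ^ 2 * ((g ω - gf xs) ⬝ᵥ (g ω - gf xs))) :=
        sum_le_sum fun ω _ => mul_le_mul_of_nonneg_left
          (sub_smul_dotProduct_self_le_of_nonexpansive hnonexp hfix x (g ω)) (hp ω)
    _ = (x - xs) ⬝ᵥ (x - xs) - 2 * α * ((gf x - gf xs) ⬝ᵥ (x - xs))
          + α ^ 2 * ∑ ω, p ω * ((g ω - gf xs) ⬝ᵥ (g ω - gf xs)) :=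
        sum_mul_dotProduct_sub_smul_self hp1 hmean _ _ _
    _ ≤ _ := by
      rw [sub_dotProduct (gf x)]
      linarith [mul_le_mul_of_nonneg_left hgap (by positivity : 0 ≤ 2 * α)]

/-- One step of a stochastic proximal gradient method: if `f` is `μ`-quasi strongly
convex with minimizer `x*` (a fixed point of the prox-gradient map), `prox` is
nonexpansive, and `g` is an unbiased estimator of `∇f(x)`, then
`E‖x⁺ - x*‖² ≤ (1 - αμ)‖x - x*‖² + α² E‖g - ∇f(x*)‖² - 2α D_f(x, x*)`. -/
theorem prox_grad_step_contraction {d : ℕ} {Ω : Type} [Fintype Ω]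
    (p : Ω → ℝ) (hp : ∀ ω, 0 ≤ p ω) (hp1 : ∑ ω, p ω = 1)
    (f : (Fin d → ℝ) → ℝ) (gf : (Fin d → ℝ) → (Fin d → ℝ))
    (μ α : ℝ) (hμ : 0 < μ) (hα : 0 < α)
    (xs x : Fin d → ℝ)
    (hqsc : ∀ y : Fin d → ℝ,
      f y + gf y ⬝ᵥ (xs - y) + (μ / 2) * ((xs - y) ⬝ᵥ (xs - y)) ≤ f xs)
    (prox : (Fin d → ℝ) → (Fin d → ℝ))
    (hnonexp : ∀ u v : Fin d → ℝ,
      (prox u - prox v) ⬝ᵥ (prox u - prox v) ≤ (u - v) ⬝ᵥ (u - v))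
    (hfix : prox (xs - α • gf xs) = xs)
    (g : Ω → Fin d → ℝ) (hmean : ∑ ω, p ω • g ω = gf x) :
    ∑ ω, p ω * ((prox (x - α • g ω) - xs) ⬝ᵥ (prox (x - α • g ω) - xs))
      ≤ (1 - α * μ) * ((x - xs) ⬝ᵥ (x - xs))
        + α ^ 2 * ∑ ω, p ω * ((g ω - gf xs) ⬝ᵥ (g ω - gf xs))
        - 2 * α * (f x - f xs - gf xs ⬝ᵥ (x - xs)) :=
  prox_grad_step_contraction_general p hp hp1 f gf μ α hα xs x hqsc prox hnonexp hfix g hmean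
end
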